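/- arXiv:1612.08888 — 2 statements merged into one kernel-verified Lean document; each statement's English description precedes it below -/
import Mathlib

section
/- Proposition (wuc games, second part): In a weakly unilaterally competitive bimatrix game Γ, every Nash equilibrium (x^N, y^N) has payoffs equal to the matrix game values: α(x^N,y^N) = v_A and β(x^N,y^N) = v_B. -/
open Matrix

noncomputable section

/-- The set of mixed strategies: the standard simplex in `ℝ^m`. -/
def Simp (m : ℕ) : Set (Fin m → ℝ) := stdSimplex ℝ (Fin m)

/-- Bilinear payoff `xᵀ A y`. -/
def pay {m n : ℕ} (A : Matrix (Fin m) (Fin n) ℝ) (x : Fin m → ℝ) (y : Fin n → ℝ) : ℝ :=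
  x ⬝ᵥ A.mulVec y

/-- Payoff of a mixed strategy `x` against the pure strategy `j`: `α(x, e_j) = (xᵀA)_j`. -/
def purePay {m n : ℕ} (A : Matrix (Fin m) (Fin n) ℝ) (x : Fin m → ℝ) (j : Fin n) : ℝ :=
  Matrix.vecMul x A j

/-- Pure best replies of player II against `x`. -/
def BRII {m n : ℕ} (B : Matrix (Fin m) (Fin n) ℝ) (x : Fin m → ℝ) : Set (Fin n) :=
  {j | ∀ k, purePay B x k ≤ purePay B x j}

/-- Best-reply region `X(j)` of column `j`. -/
def XReg {m n : ℕ} (B : Matrix (Fin m) (Fin n) ℝ) (j : Fin n) : Set (Fin m → ℝ) :=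
  {x ∈ Simp m | j ∈ BRII B x}

/-- `D`: columns whose best-reply region has a fully mixed point. -/
def Dset {m n : ℕ} (B : Matrix (Fin m) (Fin n) ℝ) : Set (Fin n) :=
  {j | ∃ x ∈ XReg B j, ∀ i, 0 < x i}

/-- `E(j)`: columns of `B` payoff-equivalent to column `j`. -/
def Ecols {m n : ℕ} (B : Matrix (Fin m) (Fin n) ℝ) (j : Fin n) : Set (Fin n) :=
  {k | ∀ i, B i k = B i j}

/-- `min_j α(x, e_j)`. -/
def minPure {m n : ℕ} (A : Matrix (Fin m) (Fin n) ℝ) (x : Fin m → ℝ) : ℝ :=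
  sInf {w | ∃ j, w = purePay A x j}

/-- `max_j α(x, e_j)`. -/
def maxPure {m n : ℕ} (A : Matrix (Fin m) (Fin n) ℝ) (x : Fin m → ℝ) : ℝ :=
  sSup {w | ∃ j, w = purePay A x j}

/-- `max_{j ∈ BR_II(x)} α(x, e_j)`. -/
def maxBR {m n : ℕ} (A B : Matrix (Fin m) (Fin n) ℝ) (x : Fin m → ℝ) : ℝ :=
  sSup {w | ∃ j ∈ BRII B x, w = purePay A x j}

/-- Matrix game value `v_A = max_{x ∈ X} min_j α(x, e_j)`. -/
def matVal {m n : ℕ} (A : Matrix (Fin m) (Fin n) ℝ) : ℝ :=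
  sSup {v | ∃ x ∈ Simp m, v = minPure A x}

/-- `min_{k ∈ E(j)} α(x, e_k)`. -/
def minE {m n : ℕ} (A B : Matrix (Fin m) (Fin n) ℝ) (j : Fin n) (x : Fin m → ℝ) : ℝ :=
  sInf {w | ∃ k ∈ Ecols B j, w = purePay A x k}

/-- Commitment value `α^L = max_{j∈D} max_{x∈X(j)} min_{k∈E(j)} α(x,e_k)`. -/
def alphaL {m n : ℕ} (A B : Matrix (Fin m) (Fin n) ℝ) : ℝ :=
  sSup {v | ∃ j ∈ Dset B, ∃ x ∈ XReg B j, v = minE A B j x}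

/-- Highest leader payoff `α^H = max_{j : X(j)≠∅} max_{x∈X(j)} α(x,e_j)`. -/
def alphaH {m n : ℕ} (A B : Matrix (Fin m) (Fin n) ℝ) : ℝ :=
  sSup {v | ∃ j, ∃ x ∈ XReg B j, v = purePay A x j}

/-- Commitment optimal strategies of the leader (player I). -/
def XLset {m n : ℕ} (A B : Matrix (Fin m) (Fin n) ℝ) : Set (Fin m → ℝ) :=
  {x | ∃ j ∈ Dset B, x ∈ XReg B j ∧ minE A B j x = alphaL A B}

/-- Non-degeneracy for player I: no mixed strategy of player I has more pure best
replies (among player II's pure strategies) than the size of its support. -/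
def NondegFor {m n : ℕ} (B : Matrix (Fin m) (Fin n) ℝ) : Prop :=
  ∀ x ∈ Simp m, (BRII B x).ncard ≤ {i | x i ≠ 0}.ncard

/-- Nash equilibrium of the bimatrix game `(A,B)`. -/
def isNE {m n : ℕ} (A B : Matrix (Fin m) (Fin n) ℝ) (x : Fin m → ℝ) (y : Fin n → ℝ) : Prop :=
  x ∈ Simp m ∧ y ∈ Simp n ∧
  (∀ x' ∈ Simp m, pay A x' y ≤ pay A x y) ∧
  (∀ y' ∈ Simp n, pay B x y' ≤ pay B x y)

/-- Strategies of player I appearing in some Nash equilibrium. -/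
def NEX {m n : ℕ} (A B : Matrix (Fin m) (Fin n) ℝ) : Set (Fin m → ℝ) :=
  {x | ∃ y, isNE A B x y}

/-- Strategies of player II appearing in some Nash equilibrium. -/
def NEY {m n : ℕ} (A B : Matrix (Fin m) (Fin n) ℝ) : Set (Fin n → ℝ) :=
  {y | ∃ x, isNE A B x y}

/-- Weakly unilaterally competitive bimatrix game. -/
def WUC {m n : ℕ} (A B : Matrix (Fin m) (Fin n) ℝ) : Prop :=
  (∀ x₁ ∈ Simp m, ∀ x₂ ∈ Simp m, ∀ y ∈ Simp n,
    (pay A x₁ y > pay A x₂ y → pay B x₁ y ≤ pay B x₂ y) ∧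
    (pay A x₁ y = pay A x₂ y → pay B x₁ y = pay B x₂ y)) ∧
  (∀ y₁ ∈ Simp n, ∀ y₂ ∈ Simp n, ∀ x ∈ Simp m,
    (pay B x y₁ > pay B x y₂ → pay A x y₁ ≤ pay A x y₂) ∧
    (pay B x y₁ = pay B x y₂ → pay A x y₁ = pay A x y₂))

/-!
At a Nash equilibrium `(x, y)` player II cannot gain by switching to a pure column `j`, so weak
unilateral competitiveness forces `α(x, y) ≤ α(x, e_j)` for every `j`; hence `α(x, y)` is at most
the guarantee `min_j α(x, e_j)` of `x`. Conversely every `x'` guarantees at most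
`α(x', y) ≤ α(x, y)`. So `x` attains the maximin and `α(x, y) = v_A`. The claim for player II is
the same statement for the transposed game `(Bᵀ, Aᵀ)`.
-/

lemma single_mem_Simp {m : ℕ} (i : Fin m) : (Pi.single i 1 : Fin m → ℝ) ∈ Simp m :=
  single_mem_stdSimplex ℝ i

lemma nonempty_fin_of_mem_Simp {m : ℕ} {x : Fin m → ℝ} (hx : x ∈ Simp m) : Nonempty (Fin m) := by
  rw [← not_isEmpty_iff]
  intro h
  simpa using hx.2

section Payoffs

variable {m n : ℕ} (A : Matrix (Fin m) (Fin n) ℝ)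

lemma pay_eq_sum_purePay (x : Fin m → ℝ) (y : Fin n → ℝ) :
    pay A x y = ∑ j, y j * purePay A x j := by
  rw [pay, dotProduct_mulVec, dotProduct_comm]
  rfl

lemma pay_single_right (x : Fin m → ℝ) (j : Fin n) :
    pay A x (Pi.single j 1) = purePay A x j := by
  simp [pay_eq_sum_purePay, Pi.single_apply]

lemma pay_transpose (x : Fin m → ℝ) (y : Fin n → ℝ) : pay Aᵀ y x = pay A x y := by
  rw [pay, pay, mulVec_transpose, dotProduct_comm, dotProduct_mulVec]

lemma minPure_eq_iInf (x : Fin m → ℝ) : minPure A x = ⨅ j, purePay A x j := by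
  rw [minPure, iInf]
  congr 1
  ext w
  simp [eq_comm]

lemma minPure_le_purePay (x : Fin m → ℝ) (j : Fin n) : minPure A x ≤ purePay A x j := by
  rw [minPure_eq_iInf]
  exact ciInf_le (Set.finite_range _).bddBelow j

lemma minPure_le_pay (x : Fin m → ℝ) {y : Fin n → ℝ} (hy : y ∈ Simp n) :
    minPure A x ≤ pay A x y :=
  calc minPure A x = ∑ j, y j * minPure A x := by rw [← Finset.sum_mul, hy.2, one_mul]
    _ ≤ ∑ j, y j * purePay A x j :=
      Finset.sum_le_sum fun j _ => mul_le_mul_of_nonneg_left (minPure_le_purePay A x j) (hy.1 j)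
    _ = pay A x y := (pay_eq_sum_purePay A x y).symm

end Payoffs

section Equilibria

variable {m n : ℕ} {A B : Matrix (Fin m) (Fin n) ℝ} {x : Fin m → ℝ} {y : Fin n → ℝ}

lemma WUC.transpose (hwuc : WUC A B) : WUC Bᵀ Aᵀ := by
  simpa only [WUC, pay_transpose] using hwuc.symm

lemma isNE.transpose (h : isNE A B x y) : isNE Bᵀ Aᵀ y x := by
  obtain ⟨hx, hy, hA, hB⟩ := h
  exact ⟨hy, hx, by simpa only [pay_transpose] using hB, by simpa only [pay_transpose] using hA⟩

lemma isNE.pay_le_purePay (hwuc : WUC A B) (h : isNE A B x y) (j : Fin n) :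
    pay A x y ≤ purePay A x j := by
  rw [← pay_single_right]
  have hcomp := hwuc.2 y h.2.1 _ (single_mem_Simp j) x h.1
  rcases (h.2.2.2 _ (single_mem_Simp j)).lt_or_eq with hlt | heq
  · exact hcomp.1 hlt
  · exact (hcomp.2 heq.symm).le

lemma isNE.pay_eq_minPure (hwuc : WUC A B) (h : isNE A B x y) : pay A x y = minPure A x := by
  have := nonempty_fin_of_mem_Simp h.2.1
  refine le_antisymm ?_ (minPure_le_pay A x h.2.1)
  rw [minPure_eq_iInf]
  exact le_ciInf (h.pay_le_purePay hwuc)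

lemma isNE.pay_eq_matVal (hwuc : WUC A B) (h : isNE A B x y) : pay A x y = matVal A := by
  have hgreatest : IsGreatest {v | ∃ x' ∈ Simp m, v = minPure A x'} (pay A x y) := by
    refine ⟨⟨x, h.1, h.pay_eq_minPure hwuc⟩, ?_⟩
    rintro v ⟨x', hx', rfl⟩
    exact (minPure_le_pay A x' h.2.1).trans (h.2.2.1 x' hx')
  exact hgreatest.csSup_eq.symm

end Equilibria

/-- in a weakly unilaterally competitive game, every Nash equilibrium
`(x^N, y^N)` has payoffs equal to the matrix game values:
`α(x^N,y^N) = v_A` and `β(x^N,y^N) = v_B`. -/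
theorem stmt9 {m n : ℕ} (A B : Matrix (Fin m) (Fin n) ℝ) (hwuc : WUC A B) :
    ∀ (xN : Fin m → ℝ) (yN : Fin n → ℝ), isNE A B xN yN →
      pay A xN yN = matVal A ∧ pay B xN yN = matVal Bᵀ := by
  intro xN yN hNE
  refine ⟨hNE.pay_eq_matVal hwuc, ?_⟩
  rw [← pay_transpose]
  exact hNE.transpose.pay_eq_matVal hwuc.transpose
end
end

section
/- Lemma (non-degenerate 2×2 case without dominated strategies): If a 2×2 bimatrix game Γ is non-degenerate for the leader (player I) and no pure strategy of player I is strongly dominated (i.e. for no i does there exist x' ∈ X with α(x',e_j) > α(e_i,e_j) for all pure strategies j of player II), then X^L ⊆ NE(X). -/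
open Matrix

noncomputable section

section Helpers

lemma purePay_eq (A : Matrix (Fin 2) (Fin 2) ℝ) (x : Fin 2 → ℝ) (j : Fin 2) :
    purePay A x j = x 0 * A 0 j + x 1 * A 1 j := by
  simp [purePay, Matrix.vecMul, dotProduct, Fin.sum_univ_two]
lemma purePay_single (A : Matrix (Fin 2) (Fin 2) ℝ) (r k : Fin 2) :
    purePay A (Pi.single r (1:ℝ)) k = A r k := by
  rw [purePay_eq]; fin_cases r <;> simp
lemma single_mem_simp (j : Fin 2) : Pi.single j (1:ℝ) ∈ Simp 2 := by
  constructor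
  · intro k
    rcases eq_or_ne k j with rfl | h
    · simp
    · simp [Pi.single_apply, h]
  · rw [Fin.sum_univ_two]; fin_cases j <;> simp
lemma mem_simp_iff (x : Fin 2 → ℝ) :
    x ∈ Simp 2 ↔ (∀ i, 0 ≤ x i) ∧ x 0 + x 1 = 1 := by
  unfold Simp stdSimplex
  rw [Set.mem_setOf_eq, Fin.sum_univ_two]
-- new stuff
lemma row0_ne (B : Matrix (Fin 2) (Fin 2) ℝ) (hnd : NondegFor B) : B 0 0 ≠ B 0 1 := by
  intro h
  have h1 := hnd (Pi.single 0 1) (single_mem_simp 0)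
  have hBR : BRII B (Pi.single 0 (1:ℝ)) = Set.univ := by
    ext k
    simp only [BRII, Set.mem_setOf_eq, Set.mem_univ, iff_true]
    intro k'
    rw [purePay_single, purePay_single]
    fin_cases k <;> fin_cases k' <;> simp [h]
  have hsupp : {i : Fin 2 | (Pi.single (0 : Fin 2) (1:ℝ) : Fin 2 → ℝ) i ≠ 0} = ({0} : Set (Fin 2)) := by
    ext i
    obtain rfl | rfl : i = 0 ∨ i = 1 := by omega
    · simp
    · simp [Pi.single_apply]
  rw [hBR, hsupp, Set.ncard_univ, Set.ncard_singleton] at h1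
  simp [Nat.card_eq_fintype_card] at h1
lemma ecols_eq (B : Matrix (Fin 2) (Fin 2) ℝ) (hB : B 0 0 ≠ B 0 1) (j : Fin 2) :
    Ecols B j = {j} := by
  ext k
  simp only [Ecols, Set.mem_setOf_eq, Set.mem_singleton_iff]
  constructor
  · intro hk
    have := hk 0
    fin_cases k <;> fin_cases j <;> simp_all
  · rintro rfl; intro i; rfl
lemma minE_eq (A B : Matrix (Fin 2) (Fin 2) ℝ) (hB : B 0 0 ≠ B 0 1) (j : Fin 2)
    (x : Fin 2 → ℝ) : minE A B j x = purePay A x j := by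
  unfold minE
  rw [ecols_eq B hB]
  have : {w | ∃ k ∈ ({j} : Set (Fin 2)), w = purePay A x k} = {purePay A x j} := by
    ext w; simp
  rw [this, csInf_singleton]
lemma le_alphaL (A B : Matrix (Fin 2) (Fin 2) ℝ) (hB : B 0 0 ≠ B 0 1) {j : Fin 2}
    {x : Fin 2 → ℝ} (hj : j ∈ Dset B) (hx : x ∈ XReg B j) :
    purePay A x j ≤ alphaL A B := by
  have hbdd : BddAbove {v | ∃ j ∈ Dset B, ∃ x ∈ XReg B j, v = minE A B j x} := by
    refine ⟨|A 0 0| + |A 0 1| + |A 1 0| + |A 1 1|, ?_⟩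
    rintro v ⟨j', hj', x', hx', rfl⟩
    rw [minE_eq A B hB, purePay_eq]
    obtain ⟨hpos, hsum⟩ := (mem_simp_iff x').mp hx'.1
    have h0 := hpos 0; have h1 := hpos 1
    obtain rfl | rfl : j' = 0 ∨ j' = 1 := by omega
    all_goals
      nlinarith [le_abs_self (A 0 0), le_abs_self (A 0 1), le_abs_self (A 1 0),
        le_abs_self (A 1 1), abs_nonneg (A 0 0), abs_nonneg (A 0 1), abs_nonneg (A 1 0),
        abs_nonneg (A 1 1)]
  have hmem : purePay A x j ∈ {v | ∃ j ∈ Dset B, ∃ x ∈ XReg B j, v = minE A B j x} :=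
    ⟨j, hj, x, hx, (minE_eq A B hB j x).symm⟩
  exact le_csSup hbdd hmem
lemma exists_q (d0 d1 : ℝ) (h1 : ¬(0 < d0 ∧ 0 < d1)) (h2 : ¬(d0 < 0 ∧ d1 < 0)) :
    ∃ q : ℝ, 0 ≤ q ∧ q ≤ 1 ∧ q * d0 + (1 - q) * d1 = 0 := by
  by_cases hd : d0 = d1
  · subst hd
    have h0 : d0 = 0 := by
      rcases lt_trichotomy d0 0 with h | h | h
      · exact absurd ⟨h, h⟩ h2
      · exact h
      · exact absurd ⟨h, h⟩ h1
    exact ⟨1/2, by norm_num, by norm_num, by rw [h0]; ring⟩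
  · have hne : d1 - d0 ≠ 0 := sub_ne_zero.mpr (Ne.symm hd)
    refine ⟨d1 / (d1 - d0), ?_, ?_, by field_simp; ring⟩
    · rcases lt_trichotomy d1 0 with h | h | h
      · have hd0 : 0 ≤ d0 := by by_contra hc; exact h2 ⟨lt_of_not_ge hc, h⟩
        exact div_nonneg_iff.mpr (Or.inr ⟨le_of_lt h, by linarith⟩)
      · simp [h]
      · have hd0 : d0 ≤ 0 := by by_contra hc; exact h1 ⟨lt_of_not_ge hc, h⟩
        exact div_nonneg (le_of_lt h) (by linarith)
    · have key : d1 / (d1 - d0) - 1 = d0 / (d1 - d0) := by field_simp; ring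
      have h2' : d0 / (d1 - d0) ≤ 0 := by
        rcases lt_trichotomy d0 0 with h | h | h
        · have hd1 : 0 ≤ d1 := by by_contra hc; exact h2 ⟨h, lt_of_not_ge hc⟩
          exact div_nonpos_iff.mpr (Or.inr ⟨le_of_lt h, by linarith⟩)
        · simp [h]
        · have hd1 : d1 ≤ 0 := by by_contra hc; exact h1 ⟨h, lt_of_not_ge hc⟩
          exact div_nonpos_iff.mpr (Or.inl ⟨le_of_lt h, by linarith⟩)
      linarith
lemma purePay_comb (M : Matrix (Fin 2) (Fin 2) ℝ) (x : Fin 2 → ℝ) (i : Fin 2) (t : ℝ)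
    (k : Fin 2) :
    purePay M (fun r => (1 - t) * x r + t * (Pi.single i (1:ℝ) : Fin 2 → ℝ) r) k
      = (1 - t) * purePay M x k + t * M i k := by
  rw [purePay_eq, purePay_eq]
  fin_cases i <;> simp [Pi.single_apply] <;> ring
lemma comb_mem_simp (x : Fin 2 → ℝ) (hx : x ∈ Simp 2) (i : Fin 2) (t : ℝ) (ht0 : 0 ≤ t)
    (ht1 : t ≤ 1) : (fun r => (1 - t) * x r + t * (Pi.single i (1:ℝ) : Fin 2 → ℝ) r) ∈ Simp 2 := by
  obtain ⟨hpos, hsum⟩ := (mem_simp_iff x).mp hx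
  obtain ⟨hpos', hsum'⟩ := (mem_simp_iff (Pi.single i (1:ℝ))).mp (single_mem_simp i)
  rw [mem_simp_iff]
  constructor
  · intro r
    have := hpos r; have := hpos' r
    nlinarith
  · nlinarith
lemma aux_contra (A B : Matrix (Fin 2) (Fin 2) ℝ) (hB : B 0 0 ≠ B 0 1) (j j' i : Fin 2)
    (hjD : j ∈ Dset B) (x : Fin 2 → ℝ) (hxS : x ∈ Simp 2)
    (hBR : ∀ k, purePay B x k ≤ purePay B x j)
    (hlt : purePay B x j' < purePay B x j)
    (hcov : ∀ k : Fin 2, k = j ∨ k = j')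
    (hi : purePay A x j < A i j)
    (hmax : purePay A x j = alphaL A B) : False := by
  set δ : ℝ := purePay B x j - purePay B x j' with hδdef
  have hδ : 0 < δ := by simp [hδdef]; linarith
  set C : ℝ := |B i j' - B i j| with hCdef
  have hC0 : 0 ≤ C := abs_nonneg _
  have hCle : B i j' - B i j ≤ C := le_abs_self _
  set t : ℝ := δ / (δ + C + 1) with htdef
  have hden : 0 < δ + C + 1 := by linarith
  have ht0 : 0 < t := div_pos hδ hden
  have ht1 : t < 1 := (div_lt_one hden).mpr (by linarith)
  have hteq : t * (δ + C + 1) = δ := div_mul_cancel₀ δ (ne_of_gt hden)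
  set xt : Fin 2 → ℝ := fun r => (1 - t) * x r + t * (Pi.single i (1:ℝ) : Fin 2 → ℝ) r with hxt
  have hxtS : xt ∈ Simp 2 := comb_mem_simp x hxS i t (le_of_lt ht0) (le_of_lt ht1)
  have hxtReg : xt ∈ XReg B j := by
    refine ⟨hxtS, fun k => ?_⟩
    rcases hcov k with rfl | rfl
    · exact le_refl _
    · rw [hxt, purePay_comb, purePay_comb]
      nlinarith [mul_le_mul_of_nonneg_left hCle (le_of_lt ht0)]
  have hle := le_alphaL A B hB hjD hxtReg
  rw [hxt, purePay_comb] at hle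
  rw [← hmax] at hle
  nlinarith [mul_pos ht0 (sub_pos.mpr hi)]
lemma pay_expand (A : Matrix (Fin 2) (Fin 2) ℝ) (x y : Fin 2 → ℝ) :
    pay A x y = purePay A x 0 * y 0 + purePay A x 1 * y 1 := by
  simp [pay, purePay, Matrix.mulVec, Matrix.vecMul, dotProduct, Fin.sum_univ_two]
  ring
lemma pay_pure_right (A : Matrix (Fin 2) (Fin 2) ℝ) (x : Fin 2 → ℝ) (j : Fin 2) :
    pay A x (Pi.single j (1:ℝ)) = purePay A x j := by
  rw [pay_expand]; fin_cases j <;> simp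

end Helpers

/-- if a 2×2 bimatrix game is non-degenerate for the leader (player I)
and no pure strategy of player I is strongly dominated, then `X^L ⊆ NE(X)`. -/
theorem stmt13 (A B : Matrix (Fin 2) (Fin 2) ℝ) (hnd : NondegFor B)
    (hnodom : ∀ i : Fin 2,
      ¬ ∃ x' ∈ Simp 2, ∀ j : Fin 2, purePay A (Pi.single i (1 : ℝ)) j < purePay A x' j) :
    XLset A B ⊆ NEX A B := by
  have hB : B 0 0 ≠ B 0 1 := row0_ne B hnd
  intro x hx
  obtain ⟨j, hjD, hxReg, hmin⟩ := hx
  rw [minE_eq A B hB] at hmin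
  have hxS : x ∈ Simp 2 := hxReg.1
  obtain ⟨hxpos, hxsum⟩ := (mem_simp_iff x).mp hxS
  by_cases hA : ∀ i, A i j ≤ purePay A x j
  · refine ⟨Pi.single j 1, hxS, single_mem_simp j, ?_, ?_⟩
    · intro x' hx'
      rw [pay_pure_right, pay_pure_right]
      obtain ⟨hp, hs⟩ := (mem_simp_iff x').mp hx'
      rw [purePay_eq]
      calc x' 0 * A 0 j + x' 1 * A 1 j
          ≤ x' 0 * purePay A x j + x' 1 * purePay A x j := by
            have := mul_le_mul_of_nonneg_left (hA 0) (hp 0)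
            have := mul_le_mul_of_nonneg_left (hA 1) (hp 1)
            linarith
        _ = purePay A x j := by rw [← add_mul, hs, one_mul]
    · intro y' hy'
      rw [pay_pure_right, pay_expand]
      obtain ⟨hp, hs⟩ := (mem_simp_iff y').mp hy'
      have h0 : purePay B x 0 ≤ purePay B x j := hxReg.2 0
      have h1 : purePay B x 1 ≤ purePay B x j := hxReg.2 1
      calc purePay B x 0 * y' 0 + purePay B x 1 * y' 1
          ≤ purePay B x j * y' 0 + purePay B x j * y' 1 := by
            have := mul_le_mul_of_nonneg_right h0 (hp 0)
            have := mul_le_mul_of_nonneg_right h1 (hp 1)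
            linarith
        _ = purePay B x j := by rw [← mul_add, hs, mul_one]
  · push_neg at hA
    obtain ⟨i, hi⟩ := hA
    have hBRj : ∀ k, purePay B x k ≤ purePay B x j := hxReg.2
    have hbb : purePay B x 0 = purePay B x 1 := by
      by_contra hne
      obtain rfl | rfl : j = 0 ∨ j = 1 := by omega
      · exact aux_contra A B hB 0 1 i hjD x hxS hBRj
          (lt_of_le_of_ne (hBRj 1) (fun h => hne h.symm)) (fun k => by omega) hi hmin
      · exact aux_contra A B hB 1 0 i hjD x hxS hBRj
          (lt_of_le_of_ne (hBRj 0) hne) (fun k => by omega) hi hmin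
    have h1 : ¬(0 < A 0 0 - A 1 0 ∧ 0 < A 0 1 - A 1 1) := by
      rintro ⟨ha, hb⟩
      refine hnodom 1 ⟨Pi.single 0 1, single_mem_simp 0, fun k => ?_⟩
      rw [purePay_single, purePay_single]
      obtain rfl | rfl : k = 0 ∨ k = 1 := by omega
      · linarith
      · linarith
    have h2 : ¬(A 0 0 - A 1 0 < 0 ∧ A 0 1 - A 1 1 < 0) := by
      rintro ⟨ha, hb⟩
      refine hnodom 0 ⟨Pi.single 1 1, single_mem_simp 1, fun k => ?_⟩
      rw [purePay_single, purePay_single]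
      obtain rfl | rfl : k = 0 ∨ k = 1 := by omega
      · linarith
      · linarith
    obtain ⟨q, hq0, hq1, hqd⟩ := exists_q (A 0 0 - A 1 0) (A 0 1 - A 1 1) h1 h2
    set y : Fin 2 → ℝ := ![q, 1 - q] with hy
    have hy0 : y 0 = q := rfl
    have hy1 : y 1 = 1 - q := rfl
    have hyS : y ∈ Simp 2 := by
      rw [mem_simp_iff]
      refine ⟨fun k => ?_, by rw [hy0, hy1]; ring⟩
      obtain rfl | rfl : k = 0 ∨ k = 1 := by omega
      · rw [hy0]; exact hq0
      · rw [hy1]; linarith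
    have key : ∀ z, z ∈ Simp 2 → pay A z y = q * A 1 0 + (1 - q) * A 1 1 := by
      intro z hz
      obtain ⟨hp, hs⟩ := (mem_simp_iff z).mp hz
      rw [pay_expand, purePay_eq, purePay_eq, hy0, hy1]
      linear_combination z 0 * hqd + (q * A 1 0 + (1 - q) * A 1 1) * hs
    have key2 : ∀ y', y' ∈ Simp 2 → pay B x y' = purePay B x 0 := by
      intro y' hy'
      obtain ⟨hp, hs⟩ := (mem_simp_iff y').mp hy'
      rw [pay_expand]
      linear_combination (-(y' 1)) * hbb + purePay B x 0 * hs
    refine ⟨y, hxS, hyS, ?_, ?_⟩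
    · intro x' hx'; rw [key x' hx', key x hxS]
    · intro y' hy'; rw [key2 y' hy', key2 y hyS]
end
end
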